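/- arXiv:math/0504513 — 3 statements merged into one kernel-verified Lean document; each statement's English description precedes it below -/
import Mathlib

section
/- Let x_1,…,x_n ∈ ℝ^d and suppose every configuration over an r-element subset of {1,…,n} has positive definite pooled SSP matrix. Let R = (R_1,…,R_g), with underlying index set R, minimize det W_R over all configurations over r-element subsets of {1,…,n}. Then for every j with R_j nonempty, every i ∈ R_j and every i' ∉ R one has (x_i − m_R(j))^T W_R^{-1} (x_i − m_R(j)) ≤ min_{1≤l≤g} (x_{i'} − m_R(l))^T W_R^{-1} (x_{i'} − m_R(l)); consequently each nonempty cluster R_j is separated from the set of discarded observations by the ellipsoid {x : (x − m_R(j))^T W_R^{-1} (x − m_R(j)) ≤ K_j} for a suitable K_j. -/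
open Matrix Finset Real

/-- The sample mean of the points `x i`, `i ∈ S`; a fixed a-priori vector `dflt` if `S = ∅`. -/
noncomputable def clusterMean {n d : ℕ} (x : Fin n → Fin d → ℝ) (dflt : Fin d → ℝ)
    (S : Finset (Fin n)) : Fin d → ℝ :=
  if S.Nonempty then (S.card : ℝ)⁻¹ • ∑ i ∈ S, x i else dflt

/-- The pooled (within-groups) SSP matrix of the configuration `C` for the data `x`:
`W = Σ_j Σ_{i ∈ C j} (x i − m_j)(x i − m_j)ᵀ`, where `m_j` is the sample mean of cluster `j`. -/
noncomputable def pooledSSP {n d g : ℕ} (x : Fin n → Fin d → ℝ) (dflt : Fin g → Fin d → ℝ)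
    (C : Fin g → Finset (Fin n)) : Matrix (Fin d) (Fin d) ℝ :=
  ∑ j, ∑ i ∈ C j, Matrix.vecMulVec (x i - clusterMean x (dflt j) (C j))
    (x i - clusterMean x (dflt j) (C j))

/-- A configuration over an `r`-element subset of `{1,…,n}`: a family of `g` pairwise
disjoint (possibly empty) clusters whose union has exactly `r` elements. -/
def IsConfig {n g : ℕ} (r : ℕ) (C : Fin g → Finset (Fin n)) : Prop :=
  (∀ j k : Fin g, j ≠ k → Disjoint (C j) (C k)) ∧ (Finset.univ.biUnion C).card = r

/-- A family of points of `ℝ^d` is in general position if any `d+1` of them are affinely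
independent. -/
def InGeneralPosition {n d : ℕ} (x : Fin n → Fin d → ℝ) : Prop :=
  ∀ s : Finset (Fin n), s.card = d + 1 → AffineIndependent ℝ (fun i : s => x (i : Fin n))

/-!
Swap a retained observation `x i` of cluster `j` with a discarded one `x i'` put into cluster
`l`. Keeping the old means as centres, the pooled scatter becomes `W - u uᵀ + v vᵀ` with
`u = x i - m_j`, `v = x i' - m_l`; re-centring at the new means only lowers it in the Loewner
order (Steiner's formula), and `det` is Loewner-monotone. Optimality thus gives
`det W ≤ det (W - u uᵀ + v vᵀ) = det W * ((1 - a) * (1 + b) + (uᵀ W⁻¹ v)²)` with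
`a = uᵀ W⁻¹ u`, `b = vᵀ W⁻¹ v`, and Cauchy–Schwarz for `W⁻¹` turns this into `a ≤ b`.
-/

open scoped MatrixOrder

namespace Matrix

variable {ι : Type*} [Fintype ι] [DecidableEq ι]

lemma det_add_vecMulVec_add_vecMulVec {R : Type*} [CommRing R] {A : Matrix ι ι R}
    (hA : IsUnit A.det) (u₁ v₁ u₂ v₂ : ι → R) :
    (A + vecMulVec u₁ v₁ + vecMulVec u₂ v₂).det =
      A.det * ((1 + v₁ ⬝ᵥ A⁻¹ *ᵥ u₁) * (1 + v₂ ⬝ᵥ A⁻¹ *ᵥ u₂)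
        - (v₁ ⬝ᵥ A⁻¹ *ᵥ u₂) * (v₂ ⬝ᵥ A⁻¹ *ᵥ u₁)) := by
  have hUV : vecMulVec u₁ v₁ + vecMulVec u₂ v₂ = (of ![u₁, u₂])ᵀ * of ![v₁, v₂] := by
    ext p q
    simp [vecMulVec_apply, mul_apply, Fin.sum_univ_two]
  rw [add_assoc, hUV, det_add_mul _ _ hA, det_fin_two]
  simp [vecMul_transpose, dotProduct_mulVec, dotProduct_comm _ u₁, dotProduct_comm _ u₂]

lemma PosSemidef.dotProduct_mulVec_mul_le {M : Matrix ι ι ℝ} (hM : M.PosSemidef)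
    (u v : ι → ℝ) :
    (u ⬝ᵥ M *ᵥ v) * (v ⬝ᵥ M *ᵥ u) ≤ (u ⬝ᵥ M *ᵥ u) * (v ⬝ᵥ M *ᵥ v) := by
  simp only [← toLinearMap₂'_apply']
  exact LinearMap.BilinForm.apply_mul_apply_le_of_forall_zero_le _
    (fun w => by simpa [toLinearMap₂'_apply'] using hM.dotProduct_mulVec_nonneg w) u v

lemma PosSemidef.one_le_det_one_add {M : Matrix ι ι ℝ} (hM : M.PosSemidef) :
    1 ≤ (1 + M).det := by
  have hH : (1 + M).IsHermitian := isHermitian_one.add hM.1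
  rw [hH.det_eq_prod_eigenvalues]
  refine Finset.one_le_prod fun k _ => ?_
  set v := hH.eigenvectorBasis k
  have hv : star (v : ι → ℝ) ⬝ᵥ (v : ι → ℝ) = 1 := by
    rw [dotProduct_comm, ← EuclideanSpace.inner_eq_star_dotProduct, real_inner_self_eq_norm_sq,
      hH.eigenvectorBasis.orthonormal.1 k, one_pow]
  rw [hH.eigenvalues_eq, add_mulVec, one_mulVec, dotProduct_add, hv]
  simpa using hM.dotProduct_mulVec_nonneg (v : ι → ℝ)

lemma PosDef.det_le_det {A B : Matrix ι ι ℝ} (hA : A.PosDef) (hAB : A ≤ B) :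
    A.det ≤ B.det := by
  obtain ⟨C, hC⟩ := CStarAlgebra.nonneg_iff_eq_star_mul_self.mp (sub_nonneg.mpr hAB)
  have hB : B = A + star C * C := by rw [← hC]; abel
  have hM : (C * A⁻¹ * star C).PosSemidef := hA.inv.posSemidef.mul_mul_conjTranspose_same C
  rw [hB, det_add_mul (star C) C hA.det_pos.ne'.isUnit]
  exact le_mul_of_one_le_right hA.det_pos.le hM.one_le_det_one_add

lemma PosDef.dotProduct_inv_mulVec_le_of_det_le {W : Matrix ι ι ℝ} (hW : W.PosDef)
    {u v : ι → ℝ} (h : W.det ≤ (W - vecMulVec u u + vecMulVec v v).det) :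
    u ⬝ᵥ W⁻¹ *ᵥ u ≤ v ⬝ᵥ W⁻¹ *ᵥ v := by
  have hCS := hW.inv.posSemidef.dotProduct_mulVec_mul_le u v
  rw [sub_eq_add_neg, ← neg_vecMulVec, det_add_vecMulVec_add_vecMulVec hW.det_pos.ne'.isUnit]
    at h
  simp only [mulVec_neg, dotProduct_neg] at h
  have hb := hW.inv.posSemidef.dotProduct_mulVec_nonneg v
  have ha := hW.inv.posSemidef.dotProduct_mulVec_nonneg u
  simp only [star_trivial] at ha hb
  nlinarith [hW.det_pos]

end Matrix

section Scatter

variable {n d : ℕ} (x : Fin n → Fin d → ℝ)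

noncomputable def scatterMatrix (S : Finset (Fin n)) (a : Fin d → ℝ) : Matrix (Fin d) (Fin d) ℝ :=
  ∑ i ∈ S, vecMulVec (x i - a) (x i - a)

lemma pooledSSP_eq_sum_scatterMatrix {g : ℕ} (dflt : Fin g → Fin d → ℝ)
    (C : Fin g → Finset (Fin n)) :
    pooledSSP x dflt C = ∑ j, scatterMatrix x (C j) (clusterMean x (dflt j) (C j)) :=
  rfl

lemma scatterMatrix_erase {S : Finset (Fin n)} {i : Fin n} (hi : i ∈ S) (a : Fin d → ℝ) :
    scatterMatrix x (S.erase i) a = scatterMatrix x S a - vecMulVec (x i - a) (x i - a) := by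
  rw [scatterMatrix, scatterMatrix, ← sum_erase_add _ _ hi, add_sub_cancel_right]

lemma scatterMatrix_insert {S : Finset (Fin n)} {i : Fin n} (hi : i ∉ S) (a : Fin d → ℝ) :
    scatterMatrix x (insert i S) a = scatterMatrix x S a + vecMulVec (x i - a) (x i - a) := by
  rw [scatterMatrix, scatterMatrix, sum_insert hi, add_comm]

lemma sum_sub_clusterMean {S : Finset (Fin n)} (hS : S.Nonempty) (dflt : Fin d → ℝ) :
    ∑ i ∈ S, (x i - clusterMean x dflt S) = 0 := by
  have hcard : (S.card : ℝ) ≠ 0 := by exact_mod_cast hS.card_ne_zero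
  rw [sum_sub_distrib, sum_const, clusterMean, if_pos hS, ← Nat.cast_smul_eq_nsmul ℝ, smul_smul,
    mul_inv_cancel₀ hcard, one_smul, sub_self]

lemma scatterMatrix_eq_scatterMatrix_clusterMean_add {S : Finset (Fin n)} (hS : S.Nonempty)
    (dflt a : Fin d → ℝ) :
    scatterMatrix x S a = scatterMatrix x S (clusterMean x dflt S) +
      (S.card : ℝ) • vecMulVec (clusterMean x dflt S - a) (clusterMean x dflt S - a) := by
  set m := clusterMean x dflt S
  have hcentred : ∀ p, ∑ i ∈ S, (x i p - m p) = 0 := fun p => by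
    simpa using congrFun (sum_sub_clusterMean x hS dflt) p
  ext p q
  have hexpand : ∀ i, (x i p - a p) * (x i q - a q) = (x i p - m p) * (x i q - m q) +
      (x i p - m p) * (m q - a q) + (m p - a p) * (x i q - m q) + (m p - a p) * (m q - a q) :=
    fun i => by ring
  simp only [scatterMatrix, Matrix.add_apply, Matrix.smul_apply, Matrix.sum_apply, vecMulVec_apply,
    Pi.sub_apply, smul_eq_mul, hexpand, sum_add_distrib, ← sum_mul, ← mul_sum, hcentred, sum_const,
    nsmul_eq_mul]
  ring

lemma scatterMatrix_clusterMean_le (S : Finset (Fin n)) (dflt a : Fin d → ℝ) :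
    scatterMatrix x S (clusterMean x dflt S) ≤ scatterMatrix x S a := by
  rcases S.eq_empty_or_nonempty with rfl | hS
  · simp [scatterMatrix]
  rw [scatterMatrix_eq_scatterMatrix_clusterMean_add x hS dflt a, le_add_iff_nonneg_right]
  exact ((posSemidef_vecMulVec_self_star _).smul (Nat.cast_nonneg _)).nonneg

lemma pooledSSP_le_sum_scatterMatrix {g : ℕ} (dflt : Fin g → Fin d → ℝ)
    (C : Fin g → Finset (Fin n)) (a : Fin g → Fin d → ℝ) :
    pooledSSP x dflt C ≤ ∑ j, scatterMatrix x (C j) (a j) :=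
  (pooledSSP_eq_sum_scatterMatrix x dflt C).trans_le <|
    sum_le_sum fun j _ => scatterMatrix_clusterMean_le x (C j) (dflt j) (a j)

end Scatter

section Exchange

variable {n g : ℕ}

def exchange (C : Fin g → Finset (Fin n)) (i i' : Fin n) (l : Fin g) : Fin g → Finset (Fin n) :=
  fun k => if k = l then insert i' ((C k).erase i) else (C k).erase i

lemma exchange_subset_insert (C : Fin g → Finset (Fin n)) (i i' : Fin n) (l k : Fin g) :
    exchange C i i' l k ⊆ insert i' (C k) := by
  unfold exchange
  split_ifs
  · exact insert_subset_insert _ (erase_subset _ _)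
  · exact (erase_subset _ _).trans (subset_insert _ _)

lemma biUnion_exchange {C : Fin g → Finset (Fin n)} (i i' : Fin n) (l : Fin g) :
    univ.biUnion (exchange C i i' l) = insert i' ((univ.biUnion C).erase i) := by
  ext k
  simp only [exchange, mem_biUnion, mem_univ, true_and, mem_insert, mem_erase]
  constructor
  · rintro ⟨j, hj⟩
    split_ifs at hj with hjl
    · rcases mem_insert.mp hj with rfl | hj
      · exact .inl rfl
      · exact .inr ⟨(mem_erase.mp hj).1, j, (mem_erase.mp hj).2⟩
    · exact .inr ⟨(mem_erase.mp hj).1, j, (mem_erase.mp hj).2⟩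
  · rintro (rfl | ⟨hki, j, hj⟩)
    · exact ⟨l, by simp⟩
    · exact ⟨j, by split_ifs <;> simp [hki, hj]⟩

lemma IsConfig.exchange {r : ℕ} {C : Fin g → Finset (Fin n)} (hC : IsConfig r C) {i i' : Fin n}
    (hi : i ∈ univ.biUnion C) (hi' : i' ∉ univ.biUnion C) (l : Fin g) :
    IsConfig r (exchange C i i' l) := by
  have hi'C : ∀ k, i' ∉ C k := fun k h => hi' (mem_biUnion.mpr ⟨k, mem_univ _, h⟩)
  refine ⟨fun j k hjk => disjoint_left.mpr fun p hpj hpk => ?_, ?_⟩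
  · rcases mem_insert.mp (exchange_subset_insert C i i' l j hpj) with rfl | hpj'
    · have only_l : ∀ k, p ∈ _root_.exchange C i p l k → k = l := fun k hk => by
        by_contra hkl
        simp only [_root_.exchange, if_neg hkl] at hk
        exact hi'C k (mem_of_mem_erase hk)
      exact hjk ((only_l j hpj).trans (only_l k hpk).symm)
    · rcases mem_insert.mp (exchange_subset_insert C i i' l k hpk) with rfl | hpk'
      · exact hi'C j hpj'
      · exact disjoint_left.mp (hC.1 j k hjk) hpj' hpk'
  · have hr : 1 ≤ r := hC.2 ▸ card_pos.mpr ⟨i, hi⟩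
    rw [biUnion_exchange, card_insert_of_notMem (fun h => hi' (mem_of_mem_erase h)),
      card_erase_of_mem hi, hC.2]
    omega

end Exchange

lemma sum_scatterMatrix_exchange {n d g : ℕ} (x : Fin n → Fin d → ℝ) {C : Fin g → Finset (Fin n)}
    (hdisj : ∀ j k, j ≠ k → Disjoint (C j) (C k)) {i i' : Fin n} {j l : Fin g} (hi : i ∈ C j)
    (hi' : i' ∉ C l) (a : Fin g → Fin d → ℝ) :
    ∑ k, scatterMatrix x (exchange C i i' l k) (a k) =
      ∑ k, scatterMatrix x (C k) (a k) - vecMulVec (x i - a j) (x i - a j) +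
        vecMulVec (x i' - a l) (x i' - a l) := by
  have herase : ∀ k, scatterMatrix x ((C k).erase i) (a k) = scatterMatrix x (C k) (a k) -
      if k = j then vecMulVec (x i - a k) (x i - a k) else 0 := fun k => by
    split_ifs with hkj
    · exact hkj ▸ scatterMatrix_erase x hi (a j)
    · rw [erase_eq_of_notMem (disjoint_left.mp (hdisj j k (Ne.symm hkj)) hi), sub_zero]
  have hexchange : ∀ k, scatterMatrix x (exchange C i i' l k) (a k) =
      scatterMatrix x ((C k).erase i) (a k) +
        if k = l then vecMulVec (x i' - a k) (x i' - a k) else 0 := fun k => by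
    unfold exchange
    split_ifs with hkl
    · exact hkl ▸ scatterMatrix_insert x (fun h => hi' (mem_of_mem_erase h)) (a l)
    · rw [add_zero]
  simp only [hexchange, herase, sum_add_distrib, sum_sub_distrib, sum_ite_eq', mem_univ, if_true]

/-- Corollary 3.2(a) of the paper.  For a TDC-optimal configuration `C`,
every retained observation is at least as close (in squared Mahalanobis distance w.r.t.
`W_C`) to its own cluster mean as any discarded observation is to any cluster mean;
consequently each nonempty cluster is separated from the discarded observations by an
ellipsoid. -/
theorem tdc_ellipsoid_separation {n d g r : ℕ}
    (x : Fin n → Fin d → ℝ) (dflt : Fin g → Fin d → ℝ)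
    (hpos : ∀ P : Fin g → Finset (Fin n), IsConfig r P → (pooledSSP x dflt P).PosDef)
    (C : Fin g → Finset (Fin n)) (hC : IsConfig r C)
    (hopt : ∀ P : Fin g → Finset (Fin n), IsConfig r P →
      (pooledSSP x dflt C).det ≤ (pooledSSP x dflt P).det) :
    (∀ j : Fin g, (C j).Nonempty → ∀ i ∈ C j, ∀ i' : Fin n, i' ∉ Finset.univ.biUnion C →
      ∀ l : Fin g,
        (x i - clusterMean x (dflt j) (C j)) ⬝ᵥ
            ((pooledSSP x dflt C)⁻¹ *ᵥ (x i - clusterMean x (dflt j) (C j))) ≤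
          (x i' - clusterMean x (dflt l) (C l)) ⬝ᵥ
            ((pooledSSP x dflt C)⁻¹ *ᵥ (x i' - clusterMean x (dflt l) (C l)))) ∧
    (∀ j : Fin g, (C j).Nonempty → ∃ K : ℝ,
      (∀ i ∈ C j,
        (x i - clusterMean x (dflt j) (C j)) ⬝ᵥ
          ((pooledSSP x dflt C)⁻¹ *ᵥ (x i - clusterMean x (dflt j) (C j))) ≤ K) ∧
      (∀ i' : Fin n, i' ∉ Finset.univ.biUnion C →
        K ≤ (x i' - clusterMean x (dflt j) (C j)) ⬝ᵥ
          ((pooledSSP x dflt C)⁻¹ *ᵥ (x i' - clusterMean x (dflt j) (C j))))) := by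
  set W := pooledSSP x dflt C
  set m := fun k => clusterMean x (dflt k) (C k)
  have separation : ∀ j, ∀ i ∈ C j, ∀ i' ∉ univ.biUnion C, ∀ l,
      (x i - m j) ⬝ᵥ (W⁻¹ *ᵥ (x i - m j)) ≤ (x i' - m l) ⬝ᵥ (W⁻¹ *ᵥ (x i' - m l)) := by
    intro j i hi i' hi' l
    have hiC : i ∈ univ.biUnion C := mem_biUnion.mpr ⟨j, mem_univ _, hi⟩
    have hP := hC.exchange hiC hi' l
    refine (hpos C hC).dotProduct_inv_mulVec_le_of_det_le ?_
    calc W.det ≤ (pooledSSP x dflt (exchange C i i' l)).det := hopt _ hP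
      _ ≤ (∑ k, scatterMatrix x (exchange C i i' l k) (m k)).det :=
        (hpos _ hP).det_le_det (pooledSSP_le_sum_scatterMatrix x dflt _ m)
      _ = _ := by
        rw [sum_scatterMatrix_exchange x hC.1 hi
          (fun h => hi' (mem_biUnion.mpr ⟨l, mem_univ _, h⟩)) m,
          ← pooledSSP_eq_sum_scatterMatrix]
  exact ⟨fun j _ => separation j, fun j hj =>
    ⟨(C j).sup' hj fun i => (x i - m j) ⬝ᵥ (W⁻¹ *ᵥ (x i - m j)),
      fun i hi => le_sup' (fun i => (x i - m j) ⬝ᵥ (W⁻¹ *ᵥ (x i - m j))) hi,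
      fun i' hi' => sup'_le _ _ fun i hi => separation j i hi i' hi' j⟩⟩
end

section
/- Let 2r ≥ n + g(d+1), n ≥ r, and let the data x_1,…,x_n ∈ ℝ^d be in general position. Then there exists a constant c > 0 depending only on x_1,…,x_n and d with the following property: for every family y_1,…,y_n ∈ ℝ^d in general position differing from x_1,…,x_n in at most n−r+g−1 indices, every configuration R over an r-element subset of {1,…,n} (for the data y_1,…,y_n) that minimizes det W_R over all such configurations satisfies v^T W_R v ≤ c·||v||² for every v ∈ ℝ^d, i.e., every eigenvalue of W_R is at most c. -/
open Matrix Finset Real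

/-!
Two bounds on `W = pooledSSP y dflt C` combine. From below: at most `n - r + g - 1` points are
replaced, so more than `g d` of the `r` points of `C` are original and one cluster contains `d + 1`
original points; these are affinely independent, so their scatter matrix is positive definite, and
as there are finitely many such sets, `W ≥ ε I` uniformly in `y` and `C`. From above: one cluster
filled with up to `r` original points plus at most `g - 1` singleton clusters is a competing
configuration whose SSP matrix is the scatter matrix of original points only, so by optimality
`det W ≤ c₀`, the largest determinant of such a scatter matrix. The eigenvalues of `W` are at least
`ε` with product at most `c₀`, hence each is at most `c₀ / ε ^ (d - 1)`.
-/

open Topology in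
theorem exists_pos_forall_le_of_forall_pos {ι : Type*} [Finite ι] {f : ι → ℝ}
    (hf : ∀ i, 0 < f i) : ∃ ε > 0, ∀ i, ε ≤ f i := by
  have : ∀ᶠ ε in 𝓝[>] (0 : ℝ), ∀ i, ε ≤ f i :=
    Filter.eventually_all.2 fun i => nhdsWithin_le_nhds (eventually_le_nhds (hf i))
  obtain ⟨ε, hε, hpos⟩ := (this.and self_mem_nhdsWithin).exists
  exact ⟨ε, hpos, hε⟩

theorem Finset.sum_sq_sub_mean_le {α : Type*} (s : Finset α) (a : α → ℝ) (t : ℝ) :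
    ∑ i ∈ s, (a i - (#s : ℝ)⁻¹ * ∑ j ∈ s, a j) ^ 2 ≤ ∑ i ∈ s, (a i - t) ^ 2 := by
  rcases s.eq_empty_or_nonempty with rfl | hs
  · simp
  set m := (#s : ℝ)⁻¹ * ∑ j ∈ s, a j
  have hsum : ∑ i ∈ s, (a i - m) = 0 := by
    have : (#s : ℝ) ≠ 0 := by exact_mod_cast hs.card_ne_zero
    rw [sum_sub_distrib, sum_const, nsmul_eq_mul, ← mul_assoc, mul_inv_cancel₀ this, one_mul,
      sub_self]
  have : ∑ i ∈ s, (a i - t) ^ 2 = ∑ i ∈ s, (a i - m) ^ 2 + #s * (m - t) ^ 2 := by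
    have : ∑ i ∈ s, (a i - t) ^ 2
        = ∑ i ∈ s, ((a i - m) ^ 2 + (m - t) ^ 2) + 2 * (m - t) * ∑ i ∈ s, (a i - m) := by
      rw [mul_sum, ← sum_add_distrib]
      exact sum_congr rfl fun i _ => by ring
    rw [this, hsum, sum_add_distrib, sum_const, nsmul_eq_mul]
    ring
  rw [this]
  have : 0 ≤ (#s : ℝ) * (m - t) ^ 2 := by positivity
  linarith

theorem Finset.mul_pow_card_sub_one_le_prod {ι : Type*} {s : Finset ι} {f : ι → ℝ} {ε : ℝ}
    (hε : 0 ≤ ε) (hf : ∀ j ∈ s, ε ≤ f j) {i : ι} (hi : i ∈ s) :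
    f i * ε ^ (#s - 1) ≤ ∏ j ∈ s, f j := by
  classical
  rw [← mul_prod_erase s f hi, ← card_erase_of_mem hi, ← prod_const]
  gcongr with j hj
  · exact hε.trans (hf i hi)
  · exact hf j (mem_of_mem_erase hj)

namespace Matrix.IsHermitian

variable {ι : Type*} [Fintype ι] [DecidableEq ι] {A : Matrix ι ι ℝ}

theorem dotProduct_self_eq_sum_sq (hA : A.IsHermitian) (v : ι → ℝ) :
    v ⬝ᵥ v = ∑ i, (hA.eigenvectorBasis i ⬝ᵥ v) ^ 2 := by
  have := hA.eigenvectorBasis.sum_inner_mul_inner (WithLp.toLp 2 v) (WithLp.toLp 2 v)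
  simp only [EuclideanSpace.inner_eq_star_dotProduct, star_trivial] at this
  simp only [sq, ← this]
  exact sum_congr rfl fun i _ => by rw [dotProduct_comm]

theorem dotProduct_mulVec_eq_sum (hA : A.IsHermitian) (v : ι → ℝ) :
    v ⬝ᵥ (A *ᵥ v) = ∑ i, hA.eigenvalues i * (hA.eigenvectorBasis i ⬝ᵥ v) ^ 2 := by
  have := hA.eigenvectorBasis.sum_inner_mul_inner (WithLp.toLp 2 v) (WithLp.toLp 2 (A *ᵥ v))
  simp only [EuclideanSpace.inner_eq_star_dotProduct, star_trivial] at this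
  rw [dotProduct_comm, ← this]
  refine sum_congr rfl fun i _ => ?_
  have hsymm : (A *ᵥ v) ⬝ᵥ hA.eigenvectorBasis i = (A *ᵥ hA.eigenvectorBasis i) ⬝ᵥ v := by
    rw [dotProduct_comm, dotProduct_mulVec, ← mulVec_transpose,
      ← conjTranspose_eq_transpose_of_trivial, hA.eq]
  rw [hsymm, hA.mulVec_eigenvectorBasis, smul_dotProduct, smul_eq_mul, dotProduct_comm]
  ring

theorem dotProduct_mulVec_le_of_eigenvalues_le (hA : A.IsHermitian) {c : ℝ}
    (h : ∀ i, hA.eigenvalues i ≤ c) (v : ι → ℝ) : v ⬝ᵥ (A *ᵥ v) ≤ c * (v ⬝ᵥ v) := by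
  rw [hA.dotProduct_mulVec_eq_sum, hA.dotProduct_self_eq_sum_sq v, mul_sum]
  exact sum_le_sum fun i _ => by gcongr; exact h i

theorem le_dotProduct_mulVec_of_le_eigenvalues (hA : A.IsHermitian) {c : ℝ}
    (h : ∀ i, c ≤ hA.eigenvalues i) (v : ι → ℝ) : c * (v ⬝ᵥ v) ≤ v ⬝ᵥ (A *ᵥ v) := by
  rw [hA.dotProduct_mulVec_eq_sum, hA.dotProduct_self_eq_sum_sq v, mul_sum]
  exact sum_le_sum fun i _ => by gcongr; exact h i

theorem le_eigenvalues_of_le_dotProduct_mulVec (hA : A.IsHermitian) {c : ℝ}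
    (h : ∀ v, c * (v ⬝ᵥ v) ≤ v ⬝ᵥ (A *ᵥ v)) (i : ι) : c ≤ hA.eigenvalues i := by
  have hunit : hA.eigenvectorBasis i ⬝ᵥ hA.eigenvectorBasis i = 1 := by
    have := real_inner_self_eq_norm_sq (hA.eigenvectorBasis i)
    rw [hA.eigenvectorBasis.orthonormal.1 i, one_pow] at this
    rwa [EuclideanSpace.inner_eq_star_dotProduct, star_trivial] at this
  simpa [hA.mulVec_eigenvectorBasis, hunit] using h (hA.eigenvectorBasis i)

theorem eigenvalues_le_of_det_le (hA : A.IsHermitian) {ε c : ℝ} (hε : 0 < ε)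
    (h : ∀ i, ε ≤ hA.eigenvalues i) (hdet : A.det ≤ c) (i : ι) :
    hA.eigenvalues i ≤ c / ε ^ (Fintype.card ι - 1) := by
  rw [le_div_iff₀ (by positivity)]
  have hprod := mul_pow_card_sub_one_le_prod hε.le (fun j _ => h j) (mem_univ i)
  rw [card_univ] at hprod
  exact hprod.trans (by simpa [hA.det_eq_prod_eigenvalues] using hdet)

end Matrix.IsHermitian

theorem Matrix.PosDef.exists_pos_le_dotProduct_mulVec {ι : Type*} [Fintype ι] [DecidableEq ι]
    {A : Matrix ι ι ℝ} (hA : A.PosDef) : ∃ ε > 0, ∀ v, ε * (v ⬝ᵥ v) ≤ v ⬝ᵥ (A *ᵥ v) := by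
  obtain ⟨ε, hε, hle⟩ := exists_pos_forall_le_of_forall_pos hA.eigenvalues_pos
  exact ⟨ε, hε, hA.isHermitian.le_dotProduct_mulVec_of_le_eigenvalues hle⟩

section ClusterSSP

variable {n d : ℕ}

noncomputable def clusterSSP (x : Fin n → Fin d → ℝ) (S : Finset (Fin n)) :
    Matrix (Fin d) (Fin d) ℝ :=
  ∑ i ∈ S, vecMulVec (x i - clusterMean x 0 S) (x i - clusterMean x 0 S)

-- With default `0` the junk value at `S = ∅` agrees with `0⁻¹ • 0`.
theorem clusterMean_zero (x : Fin n → Fin d → ℝ) (S : Finset (Fin n)) :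
    clusterMean x 0 S = (#S : ℝ)⁻¹ • ∑ i ∈ S, x i := by
  rcases S.eq_empty_or_nonempty with rfl | hS
  · simp [clusterMean]
  · simp [clusterMean, hS]

theorem sum_vecMulVec_sub_clusterMean (x : Fin n → Fin d → ℝ) (w : Fin d → ℝ)
    (S : Finset (Fin n)) :
    ∑ i ∈ S, vecMulVec (x i - clusterMean x w S) (x i - clusterMean x w S) = clusterSSP x S := by
  rcases S.eq_empty_or_nonempty with rfl | hS
  · simp [clusterSSP]
  · simp [clusterSSP, clusterMean, hS]

theorem pooledSSP_eq_sum_clusterSSP {g : ℕ} (x : Fin n → Fin d → ℝ) (dflt : Fin g → Fin d → ℝ)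
    (C : Fin g → Finset (Fin n)) : pooledSSP x dflt C = ∑ j, clusterSSP x (C j) :=
  sum_congr rfl fun j _ => sum_vecMulVec_sub_clusterMean x (dflt j) (C j)

theorem posSemidef_clusterSSP (x : Fin n → Fin d → ℝ) (S : Finset (Fin n)) :
    (clusterSSP x S).PosSemidef :=
  posSemidef_sum S fun i _ => by
    simpa using posSemidef_vecMulVec_self_star (x i - clusterMean x 0 S)

theorem dotProduct_mulVec_clusterSSP (x : Fin n → Fin d → ℝ) (S : Finset (Fin n))
    (v : Fin d → ℝ) :
    v ⬝ᵥ (clusterSSP x S *ᵥ v) = ∑ i ∈ S, ((x i - clusterMean x 0 S) ⬝ᵥ v) ^ 2 := by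
  simp only [clusterSSP, sum_mulVec, dotProduct_sum, vecMulVec_mulVec]
  refine sum_congr rfl fun i _ => ?_
  simp [dotProduct_comm v, sq]

theorem clusterSSP_congr {x y : Fin n → Fin d → ℝ} {S : Finset (Fin n)}
    (h : ∀ i ∈ S, y i = x i) : clusterSSP y S = clusterSSP x S := by
  simp only [clusterSSP, clusterMean_zero, sum_congr rfl h]
  exact sum_congr rfl fun i hi => by rw [h i hi]

theorem clusterSSP_eq_zero_of_card_le_one (x : Fin n → Fin d → ℝ) {S : Finset (Fin n)}
    (hS : #S ≤ 1) : clusterSSP x S = 0 := by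
  rcases Nat.le_one_iff_eq_zero_or_eq_one.mp hS with h | h
  · simp [clusterSSP, card_eq_zero.mp h]
  · obtain ⟨a, rfl⟩ := card_eq_one.mp h
    simp [clusterSSP, clusterMean_zero]

-- The mean of `S` minimises the sum of squares over `S`.
theorem dotProduct_mulVec_clusterSSP_mono (x : Fin n → Fin d → ℝ) {S T : Finset (Fin n)}
    (hST : S ⊆ T) (v : Fin d → ℝ) :
    v ⬝ᵥ (clusterSSP x S *ᵥ v) ≤ v ⬝ᵥ (clusterSSP x T *ᵥ v) := by
  simp only [dotProduct_mulVec_clusterSSP, clusterMean_zero, sub_dotProduct, smul_dotProduct,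
    sum_dotProduct, smul_eq_mul]
  calc _ ≤ ∑ i ∈ S, (x i ⬝ᵥ v - (#T : ℝ)⁻¹ * ∑ j ∈ T, x j ⬝ᵥ v) ^ 2 :=
        sum_sq_sub_mean_le S _ _
    _ ≤ _ := sum_le_sum_of_subset_of_nonneg hST fun _ _ _ => sq_nonneg _

theorem posDef_clusterSSP {x : Fin n → Fin d → ℝ} {S : Finset (Fin n)} (hS : #S = d + 1)
    (hx : AffineIndependent ℝ fun i : S => x i) : (clusterSSP x S).PosDef := by
  refine posDef_iff_dotProduct_mulVec.2 ⟨(posSemidef_clusterSSP x S).isHermitian, fun v hv => ?_⟩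
  rw [star_trivial]
  refine ((posSemidef_clusterSSP x S).dotProduct_mulVec_nonneg v).lt_of_ne fun h0 => hv ?_
  rw [star_trivial, dotProduct_mulVec_clusterSSP, eq_comm,
    sum_eq_zero_iff_of_nonneg fun _ _ => sq_nonneg _] at h0
  -- The points then lie in a hyperplane orthogonal to `v`, yet they affinely span `ℝ^d`.
  have hker :
      vectorSpan ℝ (Set.range fun i : S => x i) ≤ LinearMap.ker (dotProductBilin ℝ ℝ v) := by
    rw [vectorSpan_def, Submodule.span_le]
    rintro _ ⟨_, ⟨i, rfl⟩, _, ⟨j, rfl⟩, rfl⟩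
    have hi := pow_eq_zero_iff two_ne_zero |>.mp (h0 i i.2)
    have hj := pow_eq_zero_iff two_ne_zero |>.mp (h0 j j.2)
    simp only [SetLike.mem_coe, LinearMap.mem_ker, dotProductBilin_apply_apply, vsub_eq_sub]
    rw [dotProduct_comm, ← sub_sub_sub_cancel_right _ _ (clusterMean x 0 S), sub_dotProduct, hi, hj,
      sub_self]
  rw [hx.vectorSpan_eq_top_of_card_eq_finrank_add_one (by simp [hS])] at hker
  exact dotProduct_self_eq_zero.mp (hker Submodule.mem_top)

end ClusterSSP

section ClusterBounds

variable {n d : ℕ}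

theorem posSemidef_pooledSSP {g : ℕ} (x : Fin n → Fin d → ℝ) (dflt : Fin g → Fin d → ℝ)
    (C : Fin g → Finset (Fin n)) : (pooledSSP x dflt C).PosSemidef := by
  rw [pooledSSP_eq_sum_clusterSSP]
  exact posSemidef_sum _ fun j _ => posSemidef_clusterSSP x (C j)

theorem dotProduct_mulVec_clusterSSP_le_pooledSSP {g : ℕ} (x : Fin n → Fin d → ℝ)
    (dflt : Fin g → Fin d → ℝ) {C : Fin g → Finset (Fin n)} {j : Fin g} {S : Finset (Fin n)}
    (hS : S ⊆ C j) (v : Fin d → ℝ) :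
    v ⬝ᵥ (clusterSSP x S *ᵥ v) ≤ v ⬝ᵥ (pooledSSP x dflt C *ᵥ v) := by
  rw [pooledSSP_eq_sum_clusterSSP, sum_mulVec, dotProduct_sum]
  refine (dotProduct_mulVec_clusterSSP_mono x hS v).trans
    (single_le_sum (f := fun k => v ⬝ᵥ (clusterSSP x (C k) *ᵥ v)) (fun k _ => ?_) (mem_univ j))
  simpa using (posSemidef_clusterSSP x (C k)).dotProduct_mulVec_nonneg v

theorem exists_pos_le_dotProduct_mulVec_clusterSSP {x : Fin n → Fin d → ℝ}
    (hx : InGeneralPosition x) :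
    ∃ ε > 0, ∀ S : Finset (Fin n), #S = d + 1 →
      ∀ v, ε * (v ⬝ᵥ v) ≤ v ⬝ᵥ (clusterSSP x S *ᵥ v) := by
  have : ∀ S : {S : Finset (Fin n) // #S = d + 1},
      ∃ ε > 0, ∀ v, ε * (v ⬝ᵥ v) ≤ v ⬝ᵥ (clusterSSP x S *ᵥ v) := fun S =>
    (posDef_clusterSSP S.2 (hx S S.2)).exists_pos_le_dotProduct_mulVec
  choose ε hε hle using this
  obtain ⟨ε₀, hε₀, hmin⟩ := exists_pos_forall_le_of_forall_pos hε
  refine ⟨ε₀, hε₀, fun S hS v => le_trans ?_ (hle ⟨S, hS⟩ v)⟩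
  have : 0 ≤ v ⬝ᵥ v := by simpa using dotProduct_self_star_nonneg v
  exact mul_le_mul_of_nonneg_right (hmin ⟨S, hS⟩) this

end ClusterBounds

section Configurations

theorem isConfig_fibers {n g r : ℕ} (σ : Fin n → Fin g) {R : Finset (Fin n)} (hR : #R = r) :
    IsConfig r fun j => R.filter (σ · = j) := by
  refine ⟨fun j k hjk => disjoint_filter.2 fun i _ hj hk => hjk (hj ▸ hk), ?_⟩
  convert hR
  ext i
  simp

theorem exists_card_eq_card_sdiff_le {α : Type*} [Fintype α] [DecidableEq α] {U : Finset α}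
    {r m : ℕ} (hr : r ≤ Fintype.card α) (hU : r ≤ #U + m) :
    ∃ R : Finset α, #R = r ∧ #(R \ U) ≤ m := by
  rcases le_total r #U with h | h
  · obtain ⟨R, hRU, hR⟩ := exists_subset_card_eq h
    exact ⟨R, hR, by simp [sdiff_eq_empty_iff_subset.mpr hRU]⟩
  · obtain ⟨R, hUR, -, hR⟩ := exists_subsuperset_card_eq (subset_univ U) h (by simpa using hr)
    exact ⟨R, hR, by rw [card_sdiff_of_subset hUR]; omega⟩

theorem exists_injOn_and_eq_zero_iff_notMem {α : Type*} {B : Finset α} {k : ℕ} (hB : #B ≤ k) :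
    ∃ σ : α → Fin (k + 1), (∀ a, σ a = 0 ↔ a ∉ B) ∧ Set.InjOn σ B := by
  classical
  refine ⟨fun a => if h : a ∈ B then (Fin.castLE hB (B.equivFin ⟨a, h⟩)).succ else 0,
    fun a => ?_, fun a ha b hb hab => ?_⟩
  · by_cases h : a ∈ B <;> simp [h, Fin.succ_ne_zero]
  · simpa [mem_coe.mp ha, mem_coe.mp hb] using hab

theorem exists_isConfig_pooledSSP_eq_clusterSSP {n d k r : ℕ} (x y : Fin n → Fin d → ℝ)
    (dflt : Fin (k + 1) → Fin d → ℝ) (hr : r ≤ n) (hU : r ≤ #{i | y i = x i} + k) :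
    ∃ P, IsConfig r P ∧ ∃ A, pooledSSP y dflt P = clusterSSP x A := by
  obtain ⟨R, hR, hRU⟩ := exists_card_eq_card_sdiff_le (by simpa using hr) hU
  obtain ⟨σ, hσ0, hσinj⟩ := exists_injOn_and_eq_zero_iff_notMem hRU
  refine ⟨_, isConfig_fibers σ hR, R.filter (σ · = 0), ?_⟩
  rw [pooledSSP_eq_sum_clusterSSP, Fin.sum_univ_succ,
    sum_eq_zero fun j _ => clusterSSP_eq_zero_of_card_le_one y ?_, add_zero]
  · refine clusterSSP_congr fun i hi => ?_
    obtain ⟨hiR, hi0⟩ := mem_filter.mp hi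
    simpa [hiR] using (hσ0 i).mp hi0
  · have hB : ∀ a ∈ R.filter (σ · = j.succ), a ∈ R \ ({i | y i = x i} : Finset _) := fun a ha => by
      by_contra h
      exact Fin.succ_ne_zero j ((mem_filter.mp ha).2 ▸ (hσ0 a).mpr h)
    exact card_le_one.2 fun a ha b hb =>
      hσinj (hB a ha) (hB b hb) ((mem_filter.mp ha).2.trans (mem_filter.mp hb).2.symm)

theorem exists_lt_card_inter_of_mul_lt {ι α : Type*} [Fintype ι] [DecidableEq α]
    (C : ι → Finset α) (U : Finset α) {d : ℕ} (h : Fintype.card ι * d < #(univ.biUnion C ∩ U)) :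
    ∃ j, d < #(C j ∩ U) := by
  have hunion := card_biUnion_le (s := univ) (t := fun j => C j ∩ U)
  rw [← biUnion_inter] at hunion
  have : ∑ _j : ι, d < ∑ j, #(C j ∩ U) := by simpa using h.trans_le hunion
  obtain ⟨j, -, hj⟩ := exists_lt_of_sum_lt this
  exact ⟨j, hj⟩

-- At most `n - r + g - 1` of the `r` points of `C` are changed, so more than `g d` are not.
theorem exists_unchanged_subset_of_isConfig {n d g r : ℕ} (hg : 0 < g)
    (h2r : n + g * (d + 1) ≤ 2 * r) (hr : r ≤ n) {x y : Fin n → Fin d → ℝ}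
    (hdiff : #{i | y i ≠ x i} ≤ n - r + g - 1) {C : Fin g → Finset (Fin n)} (hC : IsConfig r C) :
    ∃ j, ∃ S ⊆ C j, #S = d + 1 ∧ ∀ i ∈ S, y i = x i := by
  set U : Finset (Fin n) := {i | y i = x i}
  have hchanged : #(univ.biUnion C \ U) ≤ n - r + g - 1 :=
    (card_le_card fun i hi => by simpa [U] using (mem_sdiff.mp hi).2).trans hdiff
  have hsplit := card_sdiff_add_card_inter (univ.biUnion C) U
  rw [hC.2] at hsplit
  rw [Nat.mul_succ] at h2r
  obtain ⟨j, hj⟩ := exists_lt_card_inter_of_mul_lt C U (d := d) (by rw [Fintype.card_fin]; omega)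
  obtain ⟨S, hS, hScard⟩ := exists_subset_card_eq hj
  exact ⟨j, S, hS.trans inter_subset_left, hScard, fun i hi =>
    (mem_filter.mp (mem_of_mem_inter_right (hS hi))).2⟩

end Configurations

/-- Theorem 4.3(b) of the paper.  Suppose `2r ≥ n + g(d+1)` and the data
are in general position.  There is a constant `c > 0`, depending only on the data and `d`,
such that for every family in general position differing from the data in at most
`n − r + g − 1` indices, the pooled SSP matrix of every TDC-optimal configuration
satisfies `vᵀ W v ≤ c‖v‖²`, i.e. all its eigenvalues are at most `c`. -/
theorem tdc_optimal_ssp_eigenvalues_bounded_above {n d g r : ℕ} (hg : 0 < g)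
    (h2r : n + g * (d + 1) ≤ 2 * r) (hn : r ≤ n)
    (x : Fin n → Fin d → ℝ) (hx : InGeneralPosition x) (dflt : Fin g → Fin d → ℝ) :
    ∃ c : ℝ, 0 < c ∧
      ∀ y : Fin n → Fin d → ℝ, InGeneralPosition y →
        (Finset.univ.filter (fun i => y i ≠ x i)).card ≤ n - r + g - 1 →
        ∀ C : Fin g → Finset (Fin n), IsConfig r C →
          (∀ P : Fin g → Finset (Fin n), IsConfig r P →
            (pooledSSP y dflt C).det ≤ (pooledSSP y dflt P).det) →
          ∀ v : Fin d → ℝ, v ⬝ᵥ (pooledSSP y dflt C *ᵥ v) ≤ c * (v ⬝ᵥ v) := by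
  obtain ⟨k, rfl⟩ : ∃ k, g = k + 1 := ⟨g - 1, by omega⟩
  obtain ⟨ε, hε, hlow⟩ := exists_pos_le_dotProduct_mulVec_clusterSSP hx
  set c := univ.sup' univ_nonempty fun A : Finset (Fin n) => (clusterSSP x A).det
  refine ⟨max (c / ε ^ (d - 1)) 1, by positivity, fun y _ hdiff C hC hopt v => ?_⟩
  have hW := (posSemidef_pooledSSP y dflt C).isHermitian
  have hεW : ∀ i, ε ≤ hW.eigenvalues i := hW.le_eigenvalues_of_le_dotProduct_mulVec fun u => by
    obtain ⟨j, S, hSC, hS, hyx⟩ := exists_unchanged_subset_of_isConfig hg h2r hn hdiff hC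
    calc ε * (u ⬝ᵥ u) ≤ u ⬝ᵥ (clusterSSP x S *ᵥ u) := hlow S hS u
      _ = u ⬝ᵥ (clusterSSP y S *ᵥ u) := by rw [clusterSSP_congr hyx]
      _ ≤ u ⬝ᵥ (pooledSSP y dflt C *ᵥ u) := dotProduct_mulVec_clusterSSP_le_pooledSSP y dflt hSC u
  have hdet : (pooledSSP y dflt C).det ≤ c := by
    have hsplit := card_filter_add_card_filter_not (s := univ) fun i => y i = x i
    rw [card_univ, Fintype.card_fin] at hsplit
    simp only [ne_eq] at hdiff
    obtain ⟨P, hP, A, hPA⟩ := exists_isConfig_pooledSSP_eq_clusterSSP x y dflt hn (by omega)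
    exact (hopt P hP).trans (hPA ▸ le_sup' (fun A => (clusterSSP x A).det) (mem_univ A))
  refine hW.dotProduct_mulVec_le_of_eigenvalues_le (fun i => ?_) v
  simpa using (hW.eigenvalues_le_of_det_le hε hεW hdet i).trans (le_max_left _ 1)
end

section
/- Let d ≥ 1, let A ∈ ℝ^{d×d} be symmetric positive definite, let k ≥ 1 and let y_1,…,y_k ∈ ℝ^d. Then det(A + Σ_{h=1}^k y_h y_h^T) ≥ (1 + Σ_{h=1}^k y_h^T A^{-1} y_h)·det A. -/
open Matrix Finset

/-!
With `Y` the `k × d` matrix whose rows are the `y_h`, the sum of the rank-one terms is `Yᵀ Y`, so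
the matrix determinant lemma gives `det (A + Yᵀ Y) = det A · det (1 + G)` for the Gram matrix
`G = Y A⁻¹ Yᵀ`. This `G` is positive semidefinite with `trace G = ∑ h, y_hᵀ A⁻¹ y_h`, and if its
eigenvalues are `λ_i ≥ 0` then `det (1 + G) = ∏ (1 + λ_i) ≥ 1 + ∑ λ_i = 1 + trace G`.
-/

theorem Finset.one_add_sum_le_prod_one_add {ι R : Type*} [CommSemiring R] [PartialOrder R]
    [IsOrderedRing R] (s : Finset ι) {f : ι → R} (hf : ∀ i ∈ s, 0 ≤ f i) :
    1 + ∑ i ∈ s, f i ≤ ∏ i ∈ s, (1 + f i) := by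
  classical
  induction s using Finset.cons_induction with
  | empty => simp
  | cons a s ha ih =>
    rw [sum_cons, prod_cons]
    have hfa : 0 ≤ f a := hf a (mem_cons_self a s)
    have hfs : ∀ i ∈ s, 0 ≤ f i := fun i hi => hf i (mem_cons_of_mem hi)
    calc 1 + (f a + ∑ i ∈ s, f i)
        ≤ 1 + (f a + ∑ i ∈ s, f i) + f a * ∑ i ∈ s, f i :=
          le_add_of_nonneg_right (mul_nonneg hfa (sum_nonneg hfs))
      _ = (1 + f a) * (1 + ∑ i ∈ s, f i) := by ring
      _ ≤ (1 + f a) * ∏ i ∈ s, (1 + f i) :=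
          mul_le_mul_of_nonneg_left (ih hfs) (add_nonneg zero_le_one hfa)

namespace Matrix

theorem sum_vecMulVec_eq_transpose_of_mul_of {ι m n α : Type*} [Fintype ι] [CommSemiring α]
    (u : ι → m → α) (v : ι → n → α) :
    ∑ i, vecMulVec (u i) (v i) = (of u)ᵀ * of v := by
  ext a b
  simp [sum_apply, vecMulVec_apply, mul_apply]

theorem trace_of_mul_mul_transpose_of {ι n α : Type*} [Fintype ι] [Fintype n] [CommSemiring α]
    (u v : ι → n → α) (M : Matrix n n α) :
    (of u * M * (of v)ᵀ).trace = ∑ i, u i ⬝ᵥ (M *ᵥ v i) := by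
  simp only [trace, diag, mul_apply, transpose_apply, of_apply, dotProduct, mulVec, mul_sum,
    sum_mul, mul_assoc]
  exact sum_congr rfl fun i _ => sum_comm

section Real

variable {n : Type*} [Fintype n] [DecidableEq n] {B : Matrix n n ℝ}

theorem IsHermitian.det_one_add (hB : B.IsHermitian) :
    (1 + B).det = ∏ i, (1 + hB.eigenvalues i) := by
  have h_cfc : 1 + B = cfc (fun x : ℝ => 1 + x) B := by
    rw [cfc_const_add 1 (fun x => x) B continuousOn_id hB.isSelfAdjoint,
      cfc_id' ℝ B hB.isSelfAdjoint, Algebra.algebraMap_eq_smul_one, one_smul]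
  rw [h_cfc, hB.cfc_eq]
  simp [IsHermitian.cfc, -Unitary.conjStarAlgAut_apply]

theorem PosSemidef.one_add_trace_le_det_one_add (hB : B.PosSemidef) :
    1 + B.trace ≤ (1 + B).det := by
  rw [hB.isHermitian.trace_eq_sum_eigenvalues, hB.isHermitian.det_one_add]
  exact one_add_sum_le_prod_one_add _ fun i _ => hB.eigenvalues_nonneg i

end Real

end Matrix

theorem det_add_rank_one_sum_ge_general {d k : ℕ}
    (A : Matrix (Fin d) (Fin d) ℝ) (hA : A.PosDef) (y : Fin k → Fin d → ℝ) :
    (1 + ∑ h, (y h) ⬝ᵥ (A⁻¹ *ᵥ y h)) * A.det ≤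
      (A + ∑ h, Matrix.vecMulVec (y h) (y h)).det := by
  have hGram : (of y * A⁻¹ * (of y)ᵀ).PosSemidef := by
    simpa only [conjTranspose_eq_transpose_of_trivial] using
      hA.inv.posSemidef.mul_mul_conjTranspose_same (of y)
  rw [sum_vecMulVec_eq_transpose_of_mul_of, det_add_mul _ _ hA.det_pos.ne'.isUnit,
    ← trace_of_mul_mul_transpose_of, mul_comm A.det]
  exact mul_le_mul_of_nonneg_right hGram.one_add_trace_le_det_one_add hA.det_pos.le

/-- Lemma A.1(b) of the paper.  For `d ≥ 1`, a positive definite `A`,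
`k ≥ 1` and vectors `y_1,…,y_k ∈ ℝ^d`:
`det(A + Σ_h y_h y_hᵀ) ≥ (1 + Σ_h y_hᵀ A⁻¹ y_h)·det A`. -/
theorem det_add_rank_one_sum_ge {d k : ℕ} (hd : 1 ≤ d) (hk : 1 ≤ k)
    (A : Matrix (Fin d) (Fin d) ℝ) (hA : A.PosDef) (y : Fin k → Fin d → ℝ) :
    (1 + ∑ h, (y h) ⬝ᵥ (A⁻¹ *ᵥ y h)) * A.det ≤
      (A + ∑ h, Matrix.vecMulVec (y h) (y h)).det :=
  det_add_rank_one_sum_ge_general A hA y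
end
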